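/- (WL-QLMS gradient) Let x, g, u, v ∈ ℍ^N and d ∈ ℍ be fixed, and for h ∈ ℍ^N define the widely linear output y(h) = Σ_n h_n* x_n + Σ_n g_n* x_n^i + Σ_n u_n* x_n^j + Σ_n v_n* x_n^k (i.e. y = h^H x + g^H x^i + u^H x^j + v^H x^k), the error e(h) = d − y(h), and the real-valued cost J(h) = e(h)* e(h) = |e(h)|². Then for every n the left GHR derivative of J with respect to the component h_n satisfies ∂J/∂h_n = −½ e(h) · x_n*, i.e. the row-vector gradient is D_h J = −½ e x^H. -/

import Mathlib

open scoped Quaternion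

noncomputable section

/-- The imaginary unit `i` of the quaternions. -/
def qI : ℍ[ℝ] := ⟨0, 1, 0, 0⟩
/-- The imaginary unit `j` of the quaternions. -/
def qJ : ℍ[ℝ] := ⟨0, 0, 1, 0⟩
/-- The imaginary unit `k` of the quaternions. -/
def qK : ℍ[ℝ] := ⟨0, 0, 0, 1⟩

/-- The quaternion involution `x^η = −η x η` (for a pure unit quaternion `η`). -/
def invo (η x : ℍ[ℝ]) : ℍ[ℝ] := -(η * x * η)

/-- Left GHR derivative `∂f/∂h_n` of a quaternion function of a quaternion vector variable,
with respect to the `n`-th component (the other components held fixed):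
`¼(∂f/∂a − (∂f/∂b) i − (∂f/∂c) j − (∂f/∂d) k)`, the partials being the real directional
(Fréchet) derivatives in directions `1, i, j, k` of the `n`-th coordinate. -/
def ghrV {N : ℕ} (f : (Fin N → ℍ[ℝ]) → ℍ[ℝ]) (w : Fin N → ℍ[ℝ]) (n : Fin N) : ℍ[ℝ] :=
  (1 / 4 : ℝ) • (fderiv ℝ f w (Pi.single n 1) - fderiv ℝ f w (Pi.single n qI) * qI
    - fderiv ℝ f w (Pi.single n qJ) * qJ - fderiv ℝ f w (Pi.single n qK) * qK)

/-- The widely linear output `y(h) = h^H x + g^H x^i + u^H x^j + v^H x^k`. -/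
def wlOutput {N : ℕ} (x g u v : Fin N → ℍ[ℝ]) (h : Fin N → ℍ[ℝ]) : ℍ[ℝ] :=
  (∑ n, star (h n) * x n) + (∑ n, star (g n) * invo qI (x n))
    + (∑ n, star (u n) * invo qJ (x n)) + (∑ n, star (v n) * invo qK (x n))


/-! The error `e(h) = d − y(h)` is real-affine in `h`, with derivative `δ ↦ −Σ δₙ* xₙ`, so the
product rule gives the directional derivative of `J = e* e` along `q` in the `n`-th coordinate as
`−(e* q* xₙ + xₙ* q e)`. In the GHR combination `¼ Σ_q ∂_q J · q*` over `q ∈ {1, i, j, k}` the two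
terms are governed by `Σ q e q* = 4 Re e` and `Σ q* a q* = −2 a*`, so it equals
`¼ (2 e* − 4 Re e) xₙ* = −½ e xₙ*`. -/

namespace WLQLMS

instance : StarModule ℝ ℍ[ℝ] := ⟨Quaternion.star_smul⟩

@[simp] lemma re_qI : qI.re = 0 := rfl
@[simp] lemma imI_qI : qI.imI = 1 := rfl
@[simp] lemma imJ_qI : qI.imJ = 0 := rfl
@[simp] lemma imK_qI : qI.imK = 0 := rfl
@[simp] lemma re_qJ : qJ.re = 0 := rfl
@[simp] lemma imI_qJ : qJ.imI = 0 := rfl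
@[simp] lemma imJ_qJ : qJ.imJ = 1 := rfl
@[simp] lemma imK_qJ : qJ.imK = 0 := rfl
@[simp] lemma re_qK : qK.re = 0 := rfl
@[simp] lemma imI_qK : qK.imI = 0 := rfl
@[simp] lemma imJ_qK : qK.imJ = 0 := rfl
@[simp] lemma imK_qK : qK.imK = 1 := rfl

lemma star_qI : star qI = -qI := by ext <;> simp
lemma star_qJ : star qJ = -qJ := by ext <;> simp
lemma star_qK : star qK = -qK := by ext <;> simp

theorem add_conj_qI_qJ_qK (a : ℍ[ℝ]) :
    a + qI * a * star qI + qJ * a * star qJ + qK * a * star qK = ((4 * a.re : ℝ) : ℍ[ℝ]) := by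
  ext <;> simp
  ring

theorem add_star_sandwich_qI_qJ_qK (a : ℍ[ℝ]) :
    a + star qI * a * star qI + star qJ * a * star qJ + star qK * a * star qK =
      (-2 : ℝ) • star a := by
  ext <;> simp <;> ring

def ghrCombination (D : ℍ[ℝ] → ℍ[ℝ]) : ℍ[ℝ] :=
  (1 / 4 : ℝ) • (D 1 - D qI * qI - D qJ * qJ - D qK * qK)

theorem ghrV_eq_ghrCombination {N : ℕ} (f : (Fin N → ℍ[ℝ]) → ℍ[ℝ]) (w : Fin N → ℍ[ℝ])
    (n : Fin N) : ghrV f w n = ghrCombination fun q => fderiv ℝ f w (Pi.single n q) := rfl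

theorem ghrCombination_star_mul_add_star_mul (e a : ℍ[ℝ]) :
    ghrCombination (fun q => star e * (star q * a) + star (star q * a) * e) =
      (1 / 2 : ℝ) • (e * star a) := by
  calc ghrCombination (fun q => star e * (star q * a) + star (star q * a) * e)
      = (1 / 4 : ℝ) • (star a * (e + qI * e * star qI + qJ * e * star qJ + qK * e * star qK)
          + star e * (a + star qI * a * star qI + star qJ * a * star qJ + star qK * a * star qK)) := by
        simp only [ghrCombination, star_mul, star_one, star_neg, star_qI, star_qJ, star_qK]
        noncomm_ring
    _ = (1 / 4 : ℝ) • (star a * ((4 * e.re : ℝ) : ℍ[ℝ]) + star e * ((-2 : ℝ) • star a)) := by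
        rw [add_conj_qI_qJ_qK, add_star_sandwich_qI_qJ_qK]
    _ = (1 / 2 : ℝ) • (e * star a) := by
        ext <;> simp <;> ring

theorem fderiv_star_mul_self_apply {E 𝔸 : Type*} [NormedAddCommGroup E] [NormedSpace ℝ E]
    [NormedRing 𝔸] [NormedAlgebra ℝ 𝔸] [StarRing 𝔸] [StarModule ℝ 𝔸] [ContinuousStar 𝔸]
    {e : E → 𝔸} {e' : E →L[ℝ] 𝔸} {w : E} (he : HasFDerivAt e e' w) (δ : E) :
    fderiv ℝ (fun w => star (e w) * e w) w δ = star (e w) * e' δ + star (e' δ) * e w := by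
  change fderiv ℝ ((fun w => star (e w)) * e) w δ = _
  rw [(he.star.mul' he).fderiv]
  simp

variable {N : ℕ}

def conjInner (x : Fin N → ℍ[ℝ]) : (Fin N → ℍ[ℝ]) →L[ℝ] ℍ[ℝ] :=
  ∑ n, (ContinuousLinearMap.mul ℝ ℍ[ℝ]).flip (x n)
    ∘L (starL' ℝ : ℍ[ℝ] ≃L[ℝ] ℍ[ℝ]).toContinuousLinearMap ∘L ContinuousLinearMap.proj n

theorem conjInner_apply (x w : Fin N → ℍ[ℝ]) : conjInner x w = ∑ n, star (w n) * x n := by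
  simp [conjInner]

theorem conjInner_single (x : Fin N → ℍ[ℝ]) (n : Fin N) (q : ℍ[ℝ]) :
    conjInner x (Pi.single n q) = star q * x n := by
  rw [conjInner_apply, Fintype.sum_eq_single n fun m hm => by simp [Pi.single_eq_of_ne hm]]
  simp

theorem hasFDerivAt_wlOutput (x g u v h : Fin N → ℍ[ℝ]) :
    HasFDerivAt (wlOutput x g u v) (conjInner x) h := by
  have : wlOutput x g u v = fun w => conjInner x w + wlOutput x g u v 0 := by
    ext1 w
    simp only [wlOutput, conjInner_apply, Pi.zero_apply, star_zero, zero_mul,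
      Finset.sum_const_zero, zero_add]
    abel
  rw [this]
  exact (conjInner x).hasFDerivAt.add_const _

end WLQLMS

open WLQLMS

/-- **WL-QLMS gradient**: for the cost `J(h) = e(h)* e(h)` with `e(h) = d − y(h)` and the
widely linear output `y(h) = h^H x + g^H x^i + u^H x^j + v^H x^k`, the GHR derivative with
respect to each component is `∂J/∂h_n = −½ e(h) x_n*`. -/
theorem wlqlms_gradient {N : ℕ} (x g u v : Fin N → ℍ[ℝ]) (d : ℍ[ℝ]) (h : Fin N → ℍ[ℝ]) :
    ∀ n : Fin N,
      ghrV (fun w => star (d - wlOutput x g u v w) * (d - wlOutput x g u v w)) h n =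
        -(1 / 2 : ℍ[ℝ]) * ((d - wlOutput x g u v h) * star (x n)) := by
  intro n
  have he : HasFDerivAt (fun w => d - wlOutput x g u v w) (-conjInner x) h :=
    (hasFDerivAt_wlOutput x g u v h).const_sub d
  simp only [ghrV_eq_ghrCombination, fderiv_star_mul_self_apply he,
    neg_apply, conjInner_single, ← mul_neg]
  rw [ghrCombination_star_mul_add_star_mul, star_neg, mul_neg, smul_neg,
    ← Quaternion.coe_mul_eq_smul, neg_mul]
  push_cast
  -- what is left is `((2 : ℝ) : ℍ[ℝ]) = 2` under `1 / ·`, which holds definitionally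
  rfl
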